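/- If the value function ν is a bilinear form given by a matrix A = (a_{j,k}) ∈ ℝ^{q×q}, then for every permutation π of (1,…,q) and every j ∈ Q, the paired single-permutation PermutationSHAP estimate is exact: φ̂_j^{(1)} = φ_j = ½ · Σ_{k=1}^q (a_{j,k} + a_{k,j}), where φ_j is the Shapley value of ν. -/

import Mathlib

open Finset

/-- Shapley value of player `j` for value function `ν` on coalitions of `Fin q`. -/
noncomputable def shapley {q : ℕ} (ν : Finset (Fin q) → ℝ) (j : Fin q) : ℝ :=
  ((q : ℝ))⁻¹ * ∑ C ∈ (Finset.univ.erase j).powerset,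
    (((q - 1).choose C.card : ℝ))⁻¹ * (ν (insert j C) - ν C)

/-- The coalition `C_{π,j}` of players preceding `j` in the permutation `π`,
where `π i` is the player at position `i`. -/
def preceding {q : ℕ} (π : Equiv.Perm (Fin q)) (j : Fin q) : Finset (Fin q) :=
  (Finset.univ.filter (fun i : Fin q => i < π.symm j)).image π

/-- The reversed permutation `ρ(π) = (π_q, …, π_1)`. -/
def reversedPerm {q : ℕ} (π : Equiv.Perm (Fin q)) : Equiv.Perm (Fin q) :=
  Fin.revPerm.trans π

/-- Paired single-permutation PermutationSHAP estimate. -/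
noncomputable def pairedEstimate {q : ℕ} (ν : Finset (Fin q) → ℝ)
    (π : Equiv.Perm (Fin q)) (j : Fin q) : ℝ :=
  (1 / 2 : ℝ) * (ν (insert j (preceding π j)) - ν (preceding π j)
    + ν (insert j (preceding (reversedPerm π) j)) - ν (preceding (reversedPerm π) j))

/-!
For a bilinear value function the marginal contribution of `j` to a coalition `C ∌ j` is
`a_jj + ∑_{k ∈ C} (a_jk + a_kj)`, affine in the indicator of `C`. Both the Shapley value and the
paired estimate are therefore `a_jj` plus a weighted sum of `a_jk + a_kj` over `k ≠ j`, and both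
weights equal `1/2`: every `k ≠ j` precedes `j` in exactly one of `π` and its reversal, and
complementation inside `Q \ {j}` preserves the Shapley weight of a coalition while exchanging the
coalitions that contain `k` with those that do not.
-/

lemma sum_powerset_inv_choose_card {α : Type*} (S : Finset α) :
    ∑ C ∈ S.powerset, ((#S).choose #C : ℝ)⁻¹ = #S + 1 := by
  rw [sum_powerset_apply_card (fun m => ((#S).choose m : ℝ)⁻¹)]
  have hterm : ∀ m ∈ range (#S + 1), (#S).choose m • ((#S).choose m : ℝ)⁻¹ = 1 := by
    intro m hm
    have hpos : 0 < (#S).choose m := Nat.choose_pos (Nat.lt_succ_iff.mp (mem_range.mp hm))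
    rw [nsmul_eq_mul, mul_inv_cancel₀ (Nat.cast_ne_zero.mpr hpos.ne')]
  rw [sum_congr rfl hterm]
  simp

lemma sum_powerset_filter_mem_inv_choose_card {α : Type*} [DecidableEq α] (S : Finset α) {k : α}
    (hk : k ∈ S) :
    ∑ C ∈ S.powerset with k ∈ C, ((#S).choose #C : ℝ)⁻¹ = (#S + 1) / 2 := by
  have hcompl : ∑ C ∈ S.powerset with k ∈ C, ((#S).choose #C : ℝ)⁻¹
      = ∑ C ∈ S.powerset with k ∉ C, ((#S).choose #C : ℝ)⁻¹ := by
    refine sum_nbij' (S \ ·) (S \ ·) ?_ ?_ ?_ ?_ ?_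
    · intro C hC
      simp only [mem_filter, mem_powerset] at hC ⊢
      exact ⟨sdiff_subset, by simp [hC.2]⟩
    · intro C hC
      simp only [mem_filter, mem_powerset] at hC ⊢
      exact ⟨sdiff_subset, by simp [hk, hC.2]⟩
    · exact fun C hC => Finset.sdiff_sdiff_eq_self (mem_powerset.mp (mem_filter.mp hC).1)
    · exact fun C hC => Finset.sdiff_sdiff_eq_self (mem_powerset.mp (mem_filter.mp hC).1)
    · intro C hC
      simp only [mem_filter, mem_powerset] at hC
      rw [card_sdiff_of_subset hC.1, Nat.choose_symm (card_le_card hC.1)]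
  have htotal := sum_filter_add_sum_filter_not S.powerset (k ∈ ·)
    (fun C => ((#S).choose #C : ℝ)⁻¹)
  rw [sum_powerset_inv_choose_card, ← hcompl] at htotal
  linarith

lemma sum_sum_insert_sub_sum_sum {α M : Type*} [DecidableEq α] [AddCommGroup M]
    (A : α → α → M) {j : α} {C : Finset α} (hj : j ∉ C) :
    ∑ x ∈ insert j C, ∑ y ∈ insert j C, A x y - ∑ x ∈ C, ∑ y ∈ C, A x y
      = A j j + ∑ k ∈ C, (A j k + A k j) := by
  simp only [sum_insert hj, sum_add_distrib]
  abel

lemma shapley_eq_of_marginal_eq {q : ℕ} (ν : Finset (Fin q) → ℝ) (j : Fin q) (c : ℝ)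
    (b : Fin q → ℝ) (hν : ∀ C, j ∉ C → ν (insert j C) - ν C = c + ∑ k ∈ C, b k) :
    shapley ν j = c + 1 / 2 * ∑ k ∈ univ.erase j, b k := by
  set S := univ.erase j
  have hS : #S = q - 1 := by simp [S]
  have hq : (q : ℝ) = #S + 1 := by
    rw [hS, Nat.cast_sub j.pos]
    ring
  have hswap : ∑ C ∈ S.powerset, ∑ k ∈ C, ((#S).choose #C : ℝ)⁻¹ * b k
      = ∑ k ∈ S, ∑ C ∈ S.powerset with k ∈ C, ((#S).choose #C : ℝ)⁻¹ * b k :=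
    sum_comm' fun C k => by
      simp only [mem_filter, mem_powerset]
      exact ⟨fun h => ⟨⟨h.1, h.2⟩, h.1 h.2⟩, fun h => ⟨h.1.1, h.1.2⟩⟩
  have hsum : ∑ C ∈ S.powerset, ((#S).choose #C : ℝ)⁻¹ * (ν (insert j C) - ν C)
      = c * (#S + 1) + (#S + 1) / 2 * ∑ k ∈ S, b k := by
    calc ∑ C ∈ S.powerset, ((#S).choose #C : ℝ)⁻¹ * (ν (insert j C) - ν C)
        = ∑ C ∈ S.powerset, (c * ((#S).choose #C : ℝ)⁻¹
            + ∑ k ∈ C, ((#S).choose #C : ℝ)⁻¹ * b k) := by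
          refine sum_congr rfl fun C hC => ?_
          have hjC : j ∉ C := fun h => notMem_erase j univ (mem_powerset.mp hC h)
          rw [hν C hjC, mul_add, mul_sum, mul_comm]
      _ = c * (#S + 1) + ∑ k ∈ S, (#S + 1) / 2 * b k := by
          rw [sum_add_distrib, ← mul_sum, sum_powerset_inv_choose_card, hswap]
          congr 1
          refine sum_congr rfl fun k hk => ?_
          rw [← sum_mul, sum_powerset_filter_mem_inv_choose_card S hk]
      _ = c * (#S + 1) + (#S + 1) / 2 * ∑ k ∈ S, b k := by rw [mul_sum]
  rw [shapley, ← hS, hsum, hq]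
  field_simp

variable {q : ℕ} (π : Equiv.Perm (Fin q)) (j : Fin q)

lemma mem_preceding {x : Fin q} : x ∈ preceding π j ↔ π.symm x < π.symm j := by
  simp only [preceding, mem_image, mem_filter, mem_univ, true_and]
  exact ⟨by rintro ⟨i, hi, rfl⟩; simpa using hi, fun h => ⟨π.symm x, h, π.apply_symm_apply x⟩⟩

lemma mem_preceding_reversedPerm {x : Fin q} :
    x ∈ preceding (reversedPerm π) j ↔ π.symm j < π.symm x := by
  simp [mem_preceding, reversedPerm, Fin.revPerm_symm]

lemma disjoint_preceding_reversedPerm :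
    Disjoint (preceding π j) (preceding (reversedPerm π) j) := by
  rw [disjoint_left]
  intro x h₁ h₂
  rw [mem_preceding] at h₁
  rw [mem_preceding_reversedPerm] at h₂
  exact h₁.asymm h₂

lemma preceding_union_preceding_reversedPerm :
    preceding π j ∪ preceding (reversedPerm π) j = univ.erase j := by
  ext x
  rw [mem_union, mem_preceding, mem_preceding_reversedPerm, mem_erase, ← π.symm.injective.ne_iff]
  simp [lt_or_lt_iff_ne]

lemma pairedEstimate_eq_of_marginal_eq (ν : Finset (Fin q) → ℝ) (c : ℝ) (b : Fin q → ℝ)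
    (hν : ∀ C, j ∉ C → ν (insert j C) - ν C = c + ∑ k ∈ C, b k) :
    pairedEstimate ν π j = c + 1 / 2 * ∑ k ∈ univ.erase j, b k := by
  have hsub := (preceding_union_preceding_reversedPerm π j).subset
  have hj₁ : j ∉ preceding π j := fun h => notMem_erase j univ (hsub (mem_union_left _ h))
  have hj₂ : j ∉ preceding (reversedPerm π) j := fun h =>
    notMem_erase j univ (hsub (mem_union_right _ h))
  rw [← preceding_union_preceding_reversedPerm π j,
    sum_union (disjoint_preceding_reversedPerm π j), pairedEstimate, add_sub_assoc,
    hν _ hj₁, hν _ hj₂]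
  ring

theorem paired_permutationSHAP_exact_bilinear_general (q : ℕ)
    (A : Fin q → Fin q → ℝ) (ν : Finset (Fin q) → ℝ)
    (hν : ∀ C : Finset (Fin q), ν C = ∑ j ∈ C, ∑ k ∈ C, A j k)
    (π : Equiv.Perm (Fin q)) (j : Fin q) :
    pairedEstimate ν π j = shapley ν j ∧
      shapley ν j = (1 / 2 : ℝ) * ∑ k, (A j k + A k j) := by
  have hmarginal : ∀ C, j ∉ C → ν (insert j C) - ν C = A j j + ∑ k ∈ C, (A j k + A k j) :=
    fun C hj => by rw [hν, hν, sum_sum_insert_sub_sum_sum A hj]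
  have hdiag : (1 / 2 : ℝ) * ∑ k, (A j k + A k j)
      = A j j + 1 / 2 * ∑ k ∈ univ.erase j, (A j k + A k j) := by
    rw [← add_sum_erase univ _ (mem_univ j)]
    ring
  rw [pairedEstimate_eq_of_marginal_eq π j ν _ _ hmarginal,
    shapley_eq_of_marginal_eq ν j _ _ hmarginal, hdiag]
  exact ⟨rfl, rfl⟩

/-- for a bilinear value function the paired single-permutation
PermutationSHAP estimate is exact for every permutation. -/
theorem paired_permutationSHAP_exact_bilinear (q : ℕ) (hq : 1 ≤ q)
    (A : Fin q → Fin q → ℝ) (ν : Finset (Fin q) → ℝ)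
    (hν : ∀ C : Finset (Fin q), ν C = ∑ j ∈ C, ∑ k ∈ C, A j k)
    (π : Equiv.Perm (Fin q)) (j : Fin q) :
    pairedEstimate ν π j = shapley ν j ∧
      shapley ν j = (1 / 2 : ℝ) * ∑ k, (A j k + A k j) :=
  paired_permutationSHAP_exact_bilinear_general q A ν hν π j
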